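/- Let S be the common feasible set, assumed nonempty, let p* minimize F + W over S and p̄ minimize F over S, where F(p) := ∑_i ∑_k c_i^k (p_i^k)² and W(p) := ∑_i (D_i − ∑_k p_i^k)²/(2a(I−1)). Suppose B ≥ 0 is such that |D_i − ∑_k p_i^k| ≤ B for every i and every p ∈ S. Then the average efficiency gap satisfies (1/I)·(F(p*) − F(p̄)) ≤ B²/(a(I−1)); in particular, with B fixed, the average gap between the sharing equilibrium and the social optimum tends to 0 as the number of prosumers I → ∞. -/

import Mathlib

/- Since `p*` minimizes `F + W` and `p̄` is feasible, `F(p*) - F(p̄) ≤ W(p̄) - W(p*) ≤ W(p̄)`.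
Each of the `I` terms of `W(p̄)` is at most `B² / (2a(I-1))`, so the average gap is at most
`B² / (2a(I-1))`. -/

open Finset

noncomputable section

/-- Common feasible set of the central problem and the social problem: total balance plus line
flow limits. -/
def FeasSet (I K L : ℕ) (D : Fin I → ℝ) (ptdf : Fin I → Fin L → ℝ) (F : Fin L → ℝ) :
    Set (Fin I → Fin K → ℝ) :=
  {p | (∑ i, ∑ k, p i k = ∑ i, D i) ∧
    ∀ l, |∑ i, ptdf i l * (D i - ∑ k, p i k)| ≤ F l}

/-- Total disutility `F(p) = ∑_i ∑_k c_i^k (p_i^k)^2`. -/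
def totalF (I K : ℕ) (c : Fin I → Fin K → ℝ) (p : Fin I → Fin K → ℝ) : ℝ :=
  ∑ i, ∑ k, c i k * p i k ^ 2

/-- Penalty term `W(p) = ∑_i (D_i - ∑_k p_i^k)^2 / (2a(I-1))`. -/
def totalW (I K : ℕ) (a : ℝ) (D : Fin I → ℝ) (p : Fin I → Fin K → ℝ) : ℝ :=
  ∑ i, (D i - ∑ k, p i k) ^ 2 / (2 * a * ((I : ℝ) - 1))

lemma sub_le_of_forall_add_le {α : Type*} {s : Set α} {f g : α → ℝ} {x y : α}
    (hx : ∀ z ∈ s, f x + g x ≤ f z + g z) (hy : y ∈ s) (hgx : 0 ≤ g x) :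
    f x - f y ≤ g y := by
  linarith [hx y hy]

section Penalty

variable {I K : ℕ} {a : ℝ} {D : Fin I → ℝ}

lemma penalty_denom_nonneg (ha : 0 ≤ a) (hI : 1 ≤ I) : 0 ≤ 2 * a * ((I : ℝ) - 1) := by
  have : (1 : ℝ) ≤ I := by exact_mod_cast hI
  have : 0 ≤ (I : ℝ) - 1 := by linarith
  positivity

lemma totalW_nonneg (ha : 0 ≤ a) (hI : 1 ≤ I) (p : Fin I → Fin K → ℝ) :
    0 ≤ totalW I K a D p :=
  sum_nonneg fun _ _ => div_nonneg (sq_nonneg _) (penalty_denom_nonneg ha hI)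

lemma totalW_le_of_abs_le (ha : 0 ≤ a) (hI : 1 ≤ I) {p : Fin I → Fin K → ℝ} {B : ℝ}
    (hp : ∀ i, |D i - ∑ k, p i k| ≤ B) :
    totalW I K a D p ≤ I * (B ^ 2 / (2 * a * ((I : ℝ) - 1))) := by
  have hterm : ∀ i ∈ (univ : Finset (Fin I)),
      (D i - ∑ k, p i k) ^ 2 / (2 * a * ((I : ℝ) - 1)) ≤ B ^ 2 / (2 * a * ((I : ℝ) - 1)) :=
    fun i _ => div_le_div_of_nonneg_right
      (sq_le_sq' (abs_le.mp (hp i)).1 (abs_le.mp (hp i)).2) (penalty_denom_nonneg ha hI)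
  simpa only [totalW, card_fin, nsmul_eq_mul] using sum_le_card_nsmul univ _ _ hterm

end Penalty

theorem stmt_14_general (I K L : ℕ) (hI : 2 ≤ I)
    (a : ℝ) (ha : 0 < a) (c : Fin I → Fin K → ℝ)
    (D : Fin I → ℝ) (ptdf : Fin I → Fin L → ℝ) (F : Fin L → ℝ)
    (pstar pbar : Fin I → Fin K → ℝ)
    (hstar : pstar ∈ FeasSet I K L D ptdf F ∧
      ∀ p ∈ FeasSet I K L D ptdf F,
        totalF I K c pstar + totalW I K a D pstar ≤ totalF I K c p + totalW I K a D p)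
    (hbar : pbar ∈ FeasSet I K L D ptdf F ∧
      ∀ p ∈ FeasSet I K L D ptdf F, totalF I K c pbar ≤ totalF I K c p)
    (B : ℝ)
    (hbound : ∀ p ∈ FeasSet I K L D ptdf F, ∀ i, |D i - ∑ k, p i k| ≤ B) :
    (1 / (I : ℝ)) * (totalF I K c pstar - totalF I K c pbar) ≤
      B ^ 2 / (a * ((I : ℝ) - 1)) := by
  have hI1 : 1 ≤ I := by omega
  have hden : 0 < a * ((I : ℝ) - 1) := by
    have : (2 : ℝ) ≤ I := by exact_mod_cast hI
    have : 0 < (I : ℝ) - 1 := by linarith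
    positivity
  have hgap : totalF I K c pstar - totalF I K c pbar ≤ I * (B ^ 2 / (2 * a * ((I : ℝ) - 1))) :=
    (sub_le_of_forall_add_le hstar.2 hbar.1 (totalW_nonneg ha.le hI1 pstar)).trans
      (totalW_le_of_abs_le ha.le hI1 (hbound pbar hbar.1))
  calc (1 / (I : ℝ)) * (totalF I K c pstar - totalF I K c pbar)
      ≤ (1 / (I : ℝ)) * (I * (B ^ 2 / (2 * a * ((I : ℝ) - 1)))) := by gcongr
    _ = B ^ 2 / (2 * (a * ((I : ℝ) - 1))) := by field_simp
    _ ≤ B ^ 2 / (a * ((I : ℝ) - 1)) :=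
      div_le_div_of_nonneg_left (sq_nonneg B) hden (by linarith)

/-- If every feasible net injection is bounded by `B`, then the average
efficiency gap between the sharing equilibrium `p*` (minimizer of `F + W`) and the social
optimum `p̄` (minimizer of `F`) is at most `B^2 / (a(I-1))`; hence it tends to `0` as
`I → ∞`. -/
theorem stmt_14 (I K L : ℕ) (hI : 2 ≤ I) (hK : 1 ≤ K)
    (a : ℝ) (ha : 0 < a) (c : Fin I → Fin K → ℝ) (hc : ∀ i k, 0 < c i k)
    (D : Fin I → ℝ) (ptdf : Fin I → Fin L → ℝ) (F : Fin L → ℝ) (hF : ∀ l, 0 ≤ F l)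
    (hne : (FeasSet I K L D ptdf F).Nonempty)
    (pstar pbar : Fin I → Fin K → ℝ)
    (hstar : pstar ∈ FeasSet I K L D ptdf F ∧
      ∀ p ∈ FeasSet I K L D ptdf F,
        totalF I K c pstar + totalW I K a D pstar ≤ totalF I K c p + totalW I K a D p)
    (hbar : pbar ∈ FeasSet I K L D ptdf F ∧
      ∀ p ∈ FeasSet I K L D ptdf F, totalF I K c pbar ≤ totalF I K c p)
    (B : ℝ) (hB : 0 ≤ B)
    (hbound : ∀ p ∈ FeasSet I K L D ptdf F, ∀ i, |D i - ∑ k, p i k| ≤ B) :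
    (1 / (I : ℝ)) * (totalF I K c pstar - totalF I K c pbar) ≤
      B ^ 2 / (a * ((I : ℝ) - 1)) :=
  stmt_14_general I K L hI a ha c D ptdf F pstar pbar hstar hbar B hbound
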